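/- Let m satisfy |m(k,x) − I| ≤ C⟨k⟩^{-1}⟨x⟩^{-1-δ} with δ > n for a fixed integer n ≥ 0. Define for t ≠ 0 and k ∈ ℝ the operators (W_±(t)φ)(k) = √(t/(2πi)) ∫_0^∞ e^{it(k ± x/2)²} m(∓k, tx)† φ(x) dx and (V_±(t)φ)(k) the same with m† replaced by I. Then ‖(W_±(t) − V_±(t))(x^n φ)‖_{L²(ℝ)} ≤ C |t|^{-n} min{ |t|^{-1/2} ‖φ‖_{L^∞(ℝ₊)}, ‖φ‖_{L²(ℝ₊)} }. -/

import Mathlib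

/-!
For fixed `k` the phase has modulus one and `‖m† - I‖ = ‖m - I‖`, so the inner integral is at most
`C ⟨k⟩⁻¹ ∫₀^∞ xⁿ ⟨tx⟩^{-1-δ} ‖φ x‖ dx`, while the prefactor is at most `√|t|`; since
`∫ ⟨k⟩⁻² dk = π`, the L² norm in `k` costs only a factor `√π`. As `δ > n`, the weight
`xⁿ ⟨x⟩^{-1-δ}` and its square are integrable on `(0, ∞)`, and the substitution `u = |t| x` gives
the weight `xⁿ ⟨tx⟩^{-1-δ}` L¹ norm `O(|t|^{-n-1})` and L² norm `O(|t|^{-n-1/2})`. Pairing it with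
`‖φ‖` in L¹–L^∞ or by Cauchy–Schwarz yields the two terms of the minimum.
-/

open MeasureTheory Set Real

noncomputable def bracketWeight (p : ℕ) (q a x : ℝ) : ℝ := x ^ p / √(1 + (a * x) ^ 2) ^ q

section BracketWeight

variable {p : ℕ} {q : ℝ}

lemma bracketWeight_nonneg (a : ℝ) {x : ℝ} (hx : 0 ≤ x) : 0 ≤ bracketWeight p q a x := by
  unfold bracketWeight; positivity

lemma bracketWeight_sq (a x : ℝ) :
    bracketWeight p q a x ^ 2 = bracketWeight (2 * p) (2 * q) a x := by
  unfold bracketWeight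
  rw [div_pow, ← pow_mul, mul_comm p, ← rpow_natCast (√_ ^ q), ← rpow_mul (sqrt_nonneg _)]
  norm_num [mul_comm q]

lemma bracketWeight_one_le {u : ℝ} (hu : 0 ≤ u) :
    bracketWeight p q 1 u ≤ (1 + ‖u‖ ^ 2) ^ (-(q - p) / 2) := by
  have hpos : 0 < 1 + u ^ 2 := by positivity
  have hsqrt (r : ℝ) : √(1 + u ^ 2) ^ r = (1 + u ^ 2) ^ (r / 2) := by
    rw [sqrt_eq_rpow, ← rpow_mul hpos.le, one_div_mul_eq_div]
  have hle : u ^ p ≤ √(1 + u ^ 2) ^ (p : ℝ) := by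
    rw [rpow_natCast]
    exact pow_le_pow_left₀ hu ((le_sqrt hu hpos.le).2 (by linarith)) p
  rw [bracketWeight, one_mul, norm_eq_abs, sq_abs, show -(q - p) / 2 = (p : ℝ) / 2 - q / 2 by ring,
    rpow_sub hpos, ← hsqrt, ← hsqrt]
  exact div_le_div_of_nonneg_right hle (by positivity)

lemma integrableOn_Ioi_bracketWeight_one (hpq : p + 1 < q) :
    IntegrableOn (bracketWeight p q 1) (Ioi 0) := by
  have hdom : Integrable fun u : ℝ => (1 + ‖u‖ ^ 2) ^ (-(q - p) / 2) :=
    integrable_rpow_neg_one_add_norm_sq (by rw [Module.finrank_self]; push_cast; linarith)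
  refine hdom.integrableOn.mono'
    (Measurable.aestronglyMeasurable (by unfold bracketWeight; fun_prop)) ?_
  filter_upwards [ae_restrict_mem measurableSet_Ioi] with u (hu : 0 < u)
  rw [norm_of_nonneg (bracketWeight_nonneg 1 hu.le)]
  exact bracketWeight_one_le hu.le

lemma bracketWeight_eq_rpow_mul_comp_abs_mul {a : ℝ} (ha : a ≠ 0) (x : ℝ) :
    bracketWeight p q a x = |a| ^ (-(p : ℝ)) * bracketWeight p q 1 (|a| * x) := by
  have h0 : |a| ^ p ≠ 0 := pow_ne_zero _ (abs_pos.2 ha).ne'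
  have hsq : (|a| * x) ^ 2 = (a * x) ^ 2 := by rw [mul_pow, mul_pow, sq_abs]
  rw [bracketWeight, bracketWeight, one_mul, hsq, mul_pow |a| x p, rpow_neg (abs_nonneg a),
    rpow_natCast, mul_div_assoc, inv_mul_cancel_left₀ h0]

lemma integrableOn_Ioi_bracketWeight {a : ℝ} (ha : a ≠ 0) (hpq : p + 1 < q) :
    IntegrableOn (bracketWeight p q a) (Ioi 0) := by
  have h := (integrableOn_Ioi_comp_mul_left_iff (bracketWeight p q 1) 0 (abs_pos.2 ha)).2
    (by simpa using integrableOn_Ioi_bracketWeight_one hpq)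
  rw [IntegrableOn, funext (bracketWeight_eq_rpow_mul_comp_abs_mul (p := p) (q := q) ha)]
  exact h.const_mul _

lemma integral_Ioi_bracketWeight {a : ℝ} (ha : a ≠ 0) :
    ∫ x in Ioi 0, bracketWeight p q a x
      = |a| ^ (-(p + 1 : ℝ)) * ∫ u in Ioi 0, bracketWeight p q 1 u := by
  have h0 : 0 < |a| := abs_pos.2 ha
  simp_rw [bracketWeight_eq_rpow_mul_comp_abs_mul ha]
  rw [integral_const_mul, integral_comp_mul_left_Ioi _ 0 h0, mul_zero, smul_eq_mul, ← mul_assoc,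
    ← rpow_neg_one, ← rpow_add h0, neg_add]

lemma ae_restrict_Ioi_bracketWeight_nonneg (p : ℕ) (q a : ℝ) :
    0 ≤ᵐ[volume.restrict (Ioi 0)] bracketWeight p q a := by
  filter_upwards [ae_restrict_mem measurableSet_Ioi] with x (hx : 0 < x)
  exact bracketWeight_nonneg a hx.le

lemma memLp_two_bracketWeight {a : ℝ} (ha : a ≠ 0) (hpq : (p : ℝ) + 1 / 2 < q) :
    MemLp (bracketWeight p q a) 2 (volume.restrict (Ioi 0)) := by
  refine (memLp_two_iff_integrable_sq (Measurable.aestronglyMeasurable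
    (by unfold bracketWeight; fun_prop))).2 ?_
  simp only [bracketWeight_sq]
  exact integrableOn_Ioi_bracketWeight ha (by push_cast; linarith)

end BracketWeight

section WeightedIntegral

variable {α : Type*} [MeasurableSpace α] {μ : Measure α} {w f : α → ℝ}

lemma integral_mul_le_mul_integral_of_le {M : ℝ} (hw : Integrable w μ) (hw0 : 0 ≤ᵐ[μ] w)
    (hf0 : 0 ≤ᵐ[μ] f) (hfM : ∀ᵐ x ∂μ, f x ≤ M) :
    ∫ x, w x * f x ∂μ ≤ M * ∫ x, w x ∂μ := by
  rw [← integral_const_mul]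
  refine integral_mono_of_nonneg ?_ (hw.const_mul M) ?_
  · filter_upwards [hw0, hf0] with x hwx hfx using mul_nonneg hwx hfx
  · filter_upwards [hw0, hfM] with x hwx hfx
    rw [mul_comm M]
    exact mul_le_mul_of_nonneg_left hfx hwx

lemma integral_mul_le_sqrt_mul_sqrt (hw0 : 0 ≤ᵐ[μ] w) (hf0 : 0 ≤ᵐ[μ] f) (hw : MemLp w 2 μ)
    (hf : MemLp f 2 μ) :
    ∫ x, w x * f x ∂μ ≤ √(∫ x, w x ^ 2 ∂μ) * √(∫ x, f x ^ 2 ∂μ) := by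
  have h := integral_mul_le_Lp_mul_Lq_of_nonneg HolderConjugate.two_two hw0 hf0
    (by rwa [ENNReal.ofReal_ofNat]) (by rwa [ENNReal.ofReal_ofNat])
  simpa only [rpow_two, sqrt_eq_rpow] using h

lemma memLp_two_norm_of_integrable_norm_sq {E : Type*} [NormedAddCommGroup E] {φ : α → E}
    (h : Integrable (fun x => ‖φ x‖ ^ 2) μ) : MemLp (fun x => ‖φ x‖) 2 μ := by
  have hmeas : AEMeasurable (fun x => ‖φ x‖) μ :=
    h.aemeasurable.sqrt.congr (ae_of_all _ fun x => sqrt_sq (norm_nonneg (φ x)))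
  exact (memLp_two_iff_integrable_sq hmeas.aestronglyMeasurable).2 h

end WeightedIntegral

section PairingWithBracketWeight

variable {E : Type*} [NormedAddCommGroup E] {p : ℕ} {q a M : ℝ} {φ : ℝ → E}

lemma integrableOn_bracketWeight_mul_norm (ha : a ≠ 0) (hpq : (p : ℝ) + 1 / 2 < q)
    (hφ : IntegrableOn (fun x => ‖φ x‖ ^ 2) (Ioi 0)) :
    IntegrableOn (fun x => bracketWeight p q a x * ‖φ x‖) (Ioi 0) :=
  (memLp_two_bracketWeight ha hpq).integrable_mul (memLp_two_norm_of_integrable_norm_sq hφ)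

lemma integral_bracketWeight_mul_norm_le_of_norm_le (ha : a ≠ 0) (hpq : (p : ℝ) + 1 < q)
    (hφ : ∀ x : ℝ, 0 < x → ‖φ x‖ ≤ M) :
    ∫ x in Ioi 0, bracketWeight p q a x * ‖φ x‖
      ≤ (∫ u in Ioi 0, bracketWeight p q 1 u) * |a| ^ (-(p + 1 : ℝ)) * M := by
  refine (integral_mul_le_mul_integral_of_le (integrableOn_Ioi_bracketWeight ha hpq)
    (ae_restrict_Ioi_bracketWeight_nonneg p q a) (ae_of_all _ fun x => norm_nonneg (φ x))
    (by filter_upwards [ae_restrict_mem measurableSet_Ioi] with x hx using hφ x hx)).trans_eq ?_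
  rw [integral_Ioi_bracketWeight ha]
  ring

lemma integral_bracketWeight_mul_norm_le_of_sq_integrable (ha : a ≠ 0)
    (hpq : (p : ℝ) + 1 / 2 < q) (hφ : IntegrableOn (fun x => ‖φ x‖ ^ 2) (Ioi 0)) :
    ∫ x in Ioi 0, bracketWeight p q a x * ‖φ x‖
      ≤ √(∫ u in Ioi 0, bracketWeight (2 * p) (2 * q) 1 u) * |a| ^ (-(p + 1 / 2 : ℝ)) *
        √(∫ x in Ioi 0, ‖φ x‖ ^ 2) := by
  refine (integral_mul_le_sqrt_mul_sqrt (ae_restrict_Ioi_bracketWeight_nonneg p q a)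
    (ae_of_all _ fun x => norm_nonneg (φ x)) (memLp_two_bracketWeight ha hpq)
    (memLp_two_norm_of_integrable_norm_sq hφ)).trans_eq ?_
  have hexp : -((2 * p : ℕ) + 1 : ℝ) * (1 / 2) = -(p + 1 / 2) := by push_cast; ring
  simp_rw [bracketWeight_sq]
  rw [integral_Ioi_bracketWeight ha, sqrt_mul (rpow_nonneg (abs_nonneg a) _),
    sqrt_eq_rpow (|a| ^ _), ← rpow_mul (abs_nonneg a), hexp]
  ring

lemma exists_sqrt_abs_mul_integral_bracketWeight_mul_norm_le (hpq : (p : ℝ) + 1 < q) :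
    ∃ K : ℝ, 0 < K ∧ ∀ t : ℝ, t ≠ 0 → ∀ (φ : ℝ → E) (M : ℝ), (∀ x : ℝ, 0 < x → ‖φ x‖ ≤ M) →
      IntegrableOn (fun x => ‖φ x‖ ^ 2) (Ioi 0) →
      √|t| * ∫ x in Ioi 0, bracketWeight p q t x * ‖φ x‖
        ≤ K * |t| ^ (-(p : ℝ)) * min (|t| ^ (-(1 : ℝ) / 2) * M) √(∫ x in Ioi 0, ‖φ x‖ ^ 2) := by
  set c₁ := ∫ u in Ioi 0, bracketWeight p q 1 u
  set c₂ := ∫ u in Ioi 0, bracketWeight (2 * p) (2 * q) 1 u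
  have hc₁ : 0 ≤ c₁ := integral_nonneg_of_ae (ae_restrict_Ioi_bracketWeight_nonneg p q 1)
  refine ⟨max (max c₁ √c₂) 1, by positivity, fun t ht φ M hφM hφ2 => ?_⟩
  have ht0 : 0 < |t| := abs_pos.2 ht
  have hM : 0 ≤ M := (norm_nonneg _).trans (hφM 1 one_pos)
  have hK₁ : c₁ ≤ max (max c₁ √c₂) 1 := le_max_of_le_left (le_max_left _ _)
  have hK₂ : √c₂ ≤ max (max c₁ √c₂) 1 := le_max_of_le_left (le_max_right _ _)
  rw [mul_min_of_nonneg _ _ (by positivity)]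
  refine le_min ?_ ?_
  · calc √|t| * ∫ x in Ioi 0, bracketWeight p q t x * ‖φ x‖
        ≤ √|t| * (c₁ * |t| ^ (-(p + 1 : ℝ)) * M) := by
          gcongr; exact integral_bracketWeight_mul_norm_le_of_norm_le ht hpq hφM
      _ = c₁ * (√|t| * |t| ^ (-(p + 1 : ℝ))) * M := by ring
      _ = c₁ * |t| ^ (-(p : ℝ)) * (|t| ^ (-(1 : ℝ) / 2) * M) := by
          rw [sqrt_eq_rpow |t|, ← rpow_add ht0, show 1 / 2 + -(p + 1 : ℝ) = -p + -1 / 2 by ring,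
            rpow_add ht0]
          ring
      _ ≤ _ := by gcongr
  · calc √|t| * ∫ x in Ioi 0, bracketWeight p q t x * ‖φ x‖
        ≤ √|t| * (√c₂ * |t| ^ (-(p + 1 / 2 : ℝ)) * √(∫ x in Ioi 0, ‖φ x‖ ^ 2)) := by
          gcongr
          exact integral_bracketWeight_mul_norm_le_of_sq_integrable ht (by linarith) hφ2
      _ = √c₂ * (√|t| * |t| ^ (-(p + 1 / 2 : ℝ))) * √(∫ x in Ioi 0, ‖φ x‖ ^ 2) := by ring
      _ = √c₂ * |t| ^ (-(p : ℝ)) * √(∫ x in Ioi 0, ‖φ x‖ ^ 2) := by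
          rw [sqrt_eq_rpow |t|, ← rpow_add ht0, show 1 / 2 + -(p + 1 / 2 : ℝ) = -p by ring]
      _ ≤ _ := by gcongr

end PairingWithBracketWeight

lemma norm_adjoint_apply_sub_self_le {𝕜 E : Type*} [RCLike 𝕜] [NormedAddCommGroup E]
    [InnerProductSpace 𝕜 E] [CompleteSpace E] (A : E →L[𝕜] E) (v : E) :
    ‖ContinuousLinearMap.adjoint A v - v‖ ≤ ‖A - ContinuousLinearMap.id 𝕜 E‖ * ‖v‖ := by
  have h : ContinuousLinearMap.adjoint A v - v
      = ContinuousLinearMap.adjoint (A - ContinuousLinearMap.id 𝕜 E) v := by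
    simp [map_sub, ContinuousLinearMap.adjoint_id]
  rw [h, ← LinearIsometryEquiv.norm_map ContinuousLinearMap.adjoint (A - _)]
  exact ContinuousLinearMap.le_opNorm _ _

lemma norm_phase_smul_pow_smul_adjoint_sub_le {E : Type*} [NormedAddCommGroup E]
    [InnerProductSpace ℂ E] [CompleteSpace E] {n : ℕ} {δ C σ : ℝ} {m : ℝ → ℝ → E →L[ℂ] E}
    (hm : ∀ k x : ℝ, ‖m k x - ContinuousLinearMap.id ℂ E‖
      ≤ C / (√(1 + k ^ 2) * √(1 + x ^ 2) ^ (1 + δ)))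
    (hσ : σ = 1 ∨ σ = -1) (t k : ℝ) {x : ℝ} (hx : 0 ≤ x) (v : E) :
    ‖Complex.exp (Complex.I * (t : ℂ) * ((k : ℂ) + (σ : ℂ) * (x : ℂ) / 2) ^ 2) •
        (x ^ n • (ContinuousLinearMap.adjoint (m (-σ * k) (t * x)) v - v))‖
      ≤ C / √(1 + k ^ 2) * (bracketWeight n (1 + δ) t x * ‖v‖) := by
  have hσk : (-σ * k) ^ 2 = k ^ 2 := by rcases hσ with rfl | rfl <;> ring
  have hphase :
      ‖Complex.exp (Complex.I * (t : ℂ) * ((k : ℂ) + (σ : ℂ) * (x : ℂ) / 2) ^ 2)‖ = 1 := by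
    rw [Complex.norm_exp]; simp [Complex.mul_re, pow_two]
  rw [norm_smul, norm_smul, hphase, one_mul, norm_of_nonneg (pow_nonneg hx n)]
  calc x ^ n * ‖ContinuousLinearMap.adjoint (m (-σ * k) (t * x)) v - v‖
      ≤ x ^ n * (C / (√(1 + k ^ 2) * √(1 + (t * x) ^ 2) ^ (1 + δ)) * ‖v‖) := by
        gcongr
        refine (norm_adjoint_apply_sub_self_le _ v).trans ?_
        gcongr
        simpa only [hσk] using hm (-σ * k) (t * x)
    _ = C / √(1 + k ^ 2) * (bracketWeight n (1 + δ) t x * ‖v‖) := by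
        rw [bracketWeight]; ring

lemma norm_cpow_half_div_two_pi_I_le (t : ℝ) :
    ‖((t : ℂ) / (2 * π * Complex.I)) ^ ((1 : ℂ) / 2)‖ ≤ √|t| := by
  refine (Complex.norm_cpow_le _ _).trans ?_
  norm_num [abs_of_pos pi_pos]
  rw [sqrt_eq_rpow]
  exact rpow_le_rpow (by positivity) (div_le_self (abs_nonneg t) (by linarith [pi_gt_three]))
    (by norm_num)

lemma sqrt_integral_norm_sq_le_of_norm_le_div {E : Type*} [NormedAddCommGroup E] {F : ℝ → E}
    {A : ℝ} (hF : ∀ k, ‖F k‖ ≤ A / √(1 + k ^ 2)) :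
    √(∫ k, ‖F k‖ ^ 2) ≤ √π * A := by
  have hA : 0 ≤ A := by simpa using (norm_nonneg _).trans (hF 0)
  have hsq (k : ℝ) : ‖F k‖ ^ 2 ≤ A ^ 2 * (1 + k ^ 2)⁻¹ := by
    calc ‖F k‖ ^ 2 ≤ (A / √(1 + k ^ 2)) ^ 2 := pow_le_pow_left₀ (norm_nonneg _) (hF k) 2
      _ = A ^ 2 * (1 + k ^ 2)⁻¹ := by rw [div_pow, sq_sqrt (by positivity), div_eq_mul_inv]
  calc √(∫ k, ‖F k‖ ^ 2)
      ≤ √(∫ k, A ^ 2 * (1 + k ^ 2)⁻¹) :=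
        sqrt_le_sqrt (integral_mono_of_nonneg (ae_of_all _ fun k => sq_nonneg _)
          (integrable_inv_one_add_sq.const_mul _) (ae_of_all _ hsq))
    _ = √π * A := by
        rw [integral_const_mul, integral_univ_inv_one_add_sq, sqrt_mul (sq_nonneg A), sqrt_sq hA,
          mul_comm]

theorem dressed_minus_free_weighted_bound_general {d : ℕ} (n : ℕ) (δ C : ℝ)
    (hδ : (n : ℝ) < δ) (hC : 0 < C)
    (m : ℝ → ℝ → (EuclideanSpace ℂ (Fin d) →L[ℂ] EuclideanSpace ℂ (Fin d)))
    (hm : ∀ k x : ℝ,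
      ‖m k x - ContinuousLinearMap.id ℂ (EuclideanSpace ℂ (Fin d))‖
        ≤ C / (Real.sqrt (1 + k ^ 2) * Real.sqrt (1 + x ^ 2) ^ (1 + δ))) :
    ∃ C' : ℝ, 0 < C' ∧ ∀ t : ℝ, t ≠ 0 → ∀ σ : ℝ, (σ = 1 ∨ σ = -1) →
      ∀ (φ : ℝ → EuclideanSpace ℂ (Fin d)) (M : ℝ),
      (∀ x : ℝ, 0 < x → ‖φ x‖ ≤ M) →
      IntegrableOn (fun x : ℝ => ‖φ x‖ ^ 2) (Set.Ioi 0) →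
      Real.sqrt (∫ k : ℝ,
          ‖(((t : ℂ)) / (2 * (Real.pi : ℂ) * Complex.I)) ^ ((1:ℂ)/2) •
              ∫ x in Set.Ioi (0:ℝ),
                Complex.exp (Complex.I * (t : ℂ) * ((k : ℂ) + (σ : ℂ) * (x : ℂ)/2) ^ 2) •
                  (x ^ n • ((ContinuousLinearMap.adjoint (m (-σ * k) (t * x))) (φ x) - φ x))‖ ^ 2)
        ≤ C' * |t| ^ (-(n : ℝ)) *
            min (|t| ^ (-(1:ℝ)/2) * M) (Real.sqrt (∫ x in Set.Ioi (0:ℝ), ‖φ x‖ ^ 2)) := by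
  obtain ⟨K, hK, hJ⟩ := exists_sqrt_abs_mul_integral_bracketWeight_mul_norm_le
    (E := EuclideanSpace ℂ (Fin d)) (q := 1 + δ) (by linarith)
  refine ⟨√π * C * K, by positivity, fun t ht σ hσ φ M hφM hφ2 => ?_⟩
  set J := ∫ x in Ioi 0, bracketWeight n (1 + δ) t x * ‖φ x‖
  refine (sqrt_integral_norm_sq_le_of_norm_le_div (A := √|t| * (C * J)) fun k => ?_).trans ?_
  · rw [norm_smul, mul_div_assoc, mul_div_right_comm]
    refine mul_le_mul (norm_cpow_half_div_two_pi_I_le t) ?_ (norm_nonneg _) (sqrt_nonneg _)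
    rw [← integral_const_mul]
    refine norm_integral_le_of_norm_le
      ((integrableOn_bracketWeight_mul_norm ht (by linarith) hφ2).const_mul _) ?_
    filter_upwards [ae_restrict_mem measurableSet_Ioi] with x (hx : 0 < x)
    exact norm_phase_smul_pow_smul_adjoint_sub_le hm hσ t k hx.le (φ x)
  · calc √π * (√|t| * (C * J)) = √π * C * (√|t| * J) := by ring
      _ ≤ √π * C * (K * |t| ^ (-(n : ℝ)) * min (|t| ^ (-(1 : ℝ) / 2) * M)
          √(∫ x in Ioi 0, ‖φ x‖ ^ 2)) := by gcongr √π * C * ?_; exact hJ t ht φ M hφM hφ2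
      _ = _ := by ring

/-- If `|m(k,x) − I| ≤ C ⟨k⟩^{-1} ⟨x⟩^{-1-δ}` with `δ > n`, then with
`(W_±(t)φ)(k) = √(t/(2πi)) ∫_0^∞ e^{it(k ± x/2)²} m(∓k,tx)† φ(x) dx` and `V_±(t)` the same with
`m†` replaced by `I`,
`‖(W_±(t) − V_±(t))(xⁿφ)‖_{L²(ℝ)} ≤ C' |t|^{-n} min{|t|^{-1/2} ‖φ‖_{L^∞(ℝ₊)}, ‖φ‖_{L²(ℝ₊)}}`. -/
theorem dressed_minus_free_weighted_bound {d : ℕ} (n : ℕ) (δ C : ℝ)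
    (hδ : (n : ℝ) < δ) (hC : 0 < C)
    (m : ℝ → ℝ → (EuclideanSpace ℂ (Fin d) →L[ℂ] EuclideanSpace ℂ (Fin d)))
    (heven : ∀ k x : ℝ, m k (-x) = m k x)
    (hm : ∀ k x : ℝ,
      ‖m k x - ContinuousLinearMap.id ℂ (EuclideanSpace ℂ (Fin d))‖
        ≤ C / (Real.sqrt (1 + k ^ 2) * Real.sqrt (1 + x ^ 2) ^ (1 + δ))) :
    ∃ C' : ℝ, 0 < C' ∧ ∀ t : ℝ, t ≠ 0 → ∀ σ : ℝ, (σ = 1 ∨ σ = -1) →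
      ∀ (φ : ℝ → EuclideanSpace ℂ (Fin d)) (M : ℝ),
      (∀ x : ℝ, 0 < x → ‖φ x‖ ≤ M) →
      IntegrableOn (fun x : ℝ => ‖φ x‖ ^ 2) (Set.Ioi 0) →
      Real.sqrt (∫ k : ℝ,
          ‖(((t : ℂ)) / (2 * (Real.pi : ℂ) * Complex.I)) ^ ((1:ℂ)/2) •
              ∫ x in Set.Ioi (0:ℝ),
                Complex.exp (Complex.I * (t : ℂ) * ((k : ℂ) + (σ : ℂ) * (x : ℂ)/2) ^ 2) •
                  (x ^ n • ((ContinuousLinearMap.adjoint (m (-σ * k) (t * x))) (φ x) - φ x))‖ ^ 2)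
        ≤ C' * |t| ^ (-(n : ℝ)) *
            min (|t| ^ (-(1:ℝ)/2) * M) (Real.sqrt (∫ x in Set.Ioi (0:ℝ), ‖φ x‖ ^ 2)) :=
  dressed_minus_free_weighted_bound_general n δ C hδ hC m hm
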